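/- Let D be an invertible multiplicative Hom-Lie algebra structure on a finite-dimensional complex Lie algebra g. Then dim Der_k(g) = dim Der_0(g) for all k ∈ ℕ, and hence the Hilbert series Σ_{k≥0} dim Der_k(g)·t^k equals dim Der_0(g)/(1-t) as a formal power series; in particular the total dimension Σ_k dim Der_k(g) is either zero or infinite. -/

import Mathlib

/-- The space `Der_k(g)` of `D^k`-derivations, as a submodule of `End(g)`. -/
def DerK {g : Type*} [LieRing g] [LieAlgebra ℂ g] (D : g →ₗ[ℂ] g) (k : ℕ) :
    Submodule ℂ (g →ₗ[ℂ] g) where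
  carrier := {δ | D ∘ₗ δ = δ ∘ₗ D ∧
    ∀ x y : g, δ ⁅x, y⁆ = ⁅δ x, (D ^ k) y⁆ + ⁅(D ^ k) x, δ y⁆}
  add_mem' := by
    rintro δ τ ⟨h1, h2⟩ ⟨h3, h4⟩
    refine ⟨?_, fun x y => ?_⟩
    · ext v; simp only [LinearMap.comp_apply, LinearMap.add_apply, map_add]
      rw [← LinearMap.comp_apply D δ, h1, ← LinearMap.comp_apply D τ, h3]; rfl
    · simp [LinearMap.add_apply, h2, h4, lie_add, add_lie]; abel
  zero_mem' := by exact ⟨by ext v; simp, fun x y => by simp⟩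
  smul_mem' := by
    rintro c δ ⟨h1, h2⟩
    refine ⟨?_, fun x y => ?_⟩
    · ext v; simpa using congrArg (c • ·) (LinearMap.congr_fun h1 v)
    · simp [LinearMap.smul_apply, h2, lie_smul, smul_lie, smul_add]

/-!
`D ^ k` is a Lie algebra automorphism commuting with `D`, so post-composition with it maps
`Der₀(g)` isomorphically onto `Der_k(g)` (its inverse is post-composition with `D ^ (-k)`).
Hence the dimensions are constant, the Hilbert series is `dim Der₀(g) · Σ tᵏ`, and the partial
sums of the dimensions grow linearly unless `Der₀(g) = 0`.
-/

section

variable {R L : Type*} [CommRing R] [LieRing L] [LieAlgebra R L]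

theorem pow_apply_lie {D : L →ₗ[R] L} (hmul : ∀ x y : L, D ⁅x, y⁆ = ⁅D x, D y⁆) (k : ℕ)
    (x y : L) : (D ^ k) ⁅x, y⁆ = ⁅(D ^ k) x, (D ^ k) y⁆ := by
  induction k with
  | zero => rfl
  | succ k ih => rw [pow_succ', Module.End.mul_apply, ih, hmul]; rfl

theorem LinearEquiv.symm_apply_lie {e : L ≃ₗ[R] L} (he : ∀ x y : L, e ⁅x, y⁆ = ⁅e x, e y⁆)
    (x y : L) : e.symm ⁅x, y⁆ = ⁅e.symm x, e.symm y⁆ :=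
  e.injective (by rw [he]; simp)

theorem LinearEquiv.commute_symm {e : L ≃ₗ[R] L} {f : L →ₗ[R] L}
    (h : Commute (e : L →ₗ[R] L) f) : Commute (e.symm : L →ₗ[R] L) f := by
  ext x
  apply e.injective
  have := LinearMap.congr_fun h.eq (e.symm x)
  simp_all

end

section

variable {g : Type*} [LieRing g] [LieAlgebra ℂ g] {D : g →ₗ[ℂ] g}

theorem comp_mem_derK {P δ : g →ₗ[ℂ] g} {j k : ℕ} (hP : ∀ x y : g, P ⁅x, y⁆ = ⁅P x, P y⁆)
    (hPD : Commute P D) (hPj : P * D ^ j = D ^ k) (hδ : δ ∈ DerK D j) :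
    P ∘ₗ δ ∈ DerK D k := by
  obtain ⟨hδD, hδlie⟩ := hδ
  refine ⟨?_, fun x y => ?_⟩
  · have hδD : D * δ = δ * D := hδD
    change D * (P * δ) = P * δ * D
    rw [← mul_assoc, ← hPD.eq, mul_assoc, hδD, mul_assoc]
  · simp only [LinearMap.comp_apply, hδlie, map_add, hP, ← hPj, Module.End.mul_apply]

theorem map_derK_zero_eq_derK (hmul : ∀ x y : g, D ⁅x, y⁆ = ⁅D x, D y⁆) {k : ℕ}
    (hk : Function.Bijective (D ^ k)) :
    (DerK D 0).map (LinearEquiv.congrRight (M := g) (LinearEquiv.ofBijective (D ^ k) hk) :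
      (g →ₗ[ℂ] g) →ₗ[ℂ] (g →ₗ[ℂ] g)) = DerK D k := by
  set ψ := LinearEquiv.ofBijective (D ^ k) hk
  have hψD : Commute (D ^ k) D := (Commute.refl D).pow_left k
  apply le_antisymm
  · rintro _ ⟨δ, hδ, rfl⟩
    change (D ^ k) ∘ₗ δ ∈ DerK D k
    exact comp_mem_derK (pow_apply_lie hmul k) hψD (by rw [pow_zero, mul_one]) hδ
  · intro τ hτ
    have hψsymm : (ψ.symm : g →ₗ[ℂ] g) * D ^ k = D ^ 0 := by ext; simp [ψ]
    refine ⟨ψ.symm ∘ₗ τ, comp_mem_derK (ψ.symm_apply_lie (pow_apply_lie hmul k))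
      (LinearEquiv.commute_symm hψD) hψsymm hτ, ?_⟩
    ext x
    simp [LinearEquiv.congrRight]

theorem finrank_derK_eq_finrank_derK_zero (hmul : ∀ x y : g, D ⁅x, y⁆ = ⁅D x, D y⁆)
    (hbij : Function.Bijective D) (k : ℕ) :
    Module.finrank ℂ (DerK D k) = Module.finrank ℂ (DerK D 0) := by
  have hk : Function.Bijective (D ^ k) := by
    rw [Module.End.coe_pow]
    exact hbij.iterate k
  rw [← map_derK_zero_eq_derK hmul hk, LinearEquiv.finrank_map_eq]

end

theorem PowerSeries.mk_const_mul_one_sub_X {R : Type*} [CommRing R] (a : R) :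
    (PowerSeries.mk fun _ => a) * (1 - PowerSeries.X) = PowerSeries.C a := by
  have : (PowerSeries.mk fun _ => a) = PowerSeries.C a * PowerSeries.mk 1 := by
    ext n; simp
  rw [this, mul_assoc, PowerSeries.mk_one_mul_one_sub_eq_one, mul_one]

open PowerSeries in
theorem stmt17_general {g : Type*} [LieRing g] [LieAlgebra ℂ g]
    (D : g →ₗ[ℂ] g)
    (hmul : ∀ x y, D ⁅x, y⁆ = ⁅D x, D y⁆)
    (hbij : Function.Bijective D) :
    (∀ k : ℕ, Module.finrank ℂ (DerK D k) = Module.finrank ℂ (DerK D 0)) ∧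
    ((PowerSeries.mk fun k => (Module.finrank ℂ (DerK D k) : ℚ)) *
        (1 - PowerSeries.X) =
      PowerSeries.C (Module.finrank ℂ (DerK D 0) : ℚ)) ∧
    (Module.finrank ℂ (DerK D 0) = 0 ∨
      ∀ N : ℕ, ∃ m : ℕ,
        N ≤ ∑ k ∈ Finset.range m, Module.finrank ℂ (DerK D k)) := by
  have hconst := finrank_derK_eq_finrank_derK_zero hmul hbij
  refine ⟨hconst, ?_, ?_⟩
  · simp only [hconst]
    exact PowerSeries.mk_const_mul_one_sub_X _
  · rcases Nat.eq_zero_or_pos (Module.finrank ℂ (DerK D 0)) with h | h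
    · exact Or.inl h
    · refine Or.inr fun N => ⟨N, ?_⟩
      simp only [hconst, Finset.sum_const, Finset.card_range, smul_eq_mul]
      exact Nat.le_mul_of_pos_right N h

open PowerSeries in
/-- for an invertible multiplicative Hom-Lie structure `D` on a
finite-dimensional complex Lie algebra `g`, all `Der_k(g)` have the same
dimension, the Hilbert series `Σ dim Der_k(g) tᵏ` equals
`dim Der₀(g)/(1-t)` as a formal power series, and the total dimension
`Σ_k dim Der_k(g)` is either zero or infinite. -/
theorem stmt17 {g : Type*} [LieRing g] [LieAlgebra ℂ g] [FiniteDimensional ℂ g]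
    (D : g →ₗ[ℂ] g)
    (hmul : ∀ x y, D ⁅x, y⁆ = ⁅D x, D y⁆)
    (hhj : ∀ x y z : g, ⁅D x, ⁅y, z⁆⁆ + ⁅D y, ⁅z, x⁆⁆ + ⁅D z, ⁅x, y⁆⁆ = 0)
    (hbij : Function.Bijective D) :
    (∀ k : ℕ, Module.finrank ℂ (DerK D k) = Module.finrank ℂ (DerK D 0)) ∧
    ((PowerSeries.mk fun k => (Module.finrank ℂ (DerK D k) : ℚ)) *
        (1 - PowerSeries.X) =
      PowerSeries.C (Module.finrank ℂ (DerK D 0) : ℚ)) ∧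
    (Module.finrank ℂ (DerK D 0) = 0 ∨
      ∀ N : ℕ, ∃ m : ℕ,
        N ≤ ∑ k ∈ Finset.range m, Module.finrank ℂ (DerK D k)) :=
  stmt17_general D hmul hbij
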